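/- The hv-curvature P* of the Chern connection satisfies the symmetry P*(X,Y)Z = P*(Z,Y)X for all vector fields X,Y,Z on TM. -/

import Mathlib

/-- Abstract Klein–Grifone setting: the Lie algebra of vector fields on the tangent
bundle `TM` of a manifold `M`, regarded as a module over the smooth functions on `TM`,
together with the natural almost-tangent structure `J`, the Liouville (canonical)
vector field `C`, and the directional-derivative action of vector fields on functions. -/
structure KGSetting where
  /-- vector fields on TM -/
  VF : Type
  /-- smooth functions on TM -/
  Fn : Type
  [vfLie : LieRing VF]
  [vfAlg : LieAlgebra ℝ VF]
  [fnRing : CommRing Fn]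
  [fnAlg : Algebra ℝ Fn]
  [fnModVF : Module Fn VF]
  /-- the directional derivative `X.f` of a function along a vector field -/
  der : VF →ₗ[ℝ] Fn →ₗ[ℝ] Fn
  der_mul : ∀ (X : VF) (f g : Fn), der X (f * g) = der X f * g + f * der X g
  /-- Leibniz rule for the Lie bracket and the `Fn`-module structure -/
  bracket_smul : ∀ (X : VF) (f : Fn) (Y : VF), ⁅X, f • Y⁆ = der X f • Y + f • ⁅X, Y⁆
  /-- the natural almost-tangent structure -/
  J : VF →ₗ[ℝ] VF
  /-- the Liouville (canonical) vector field -/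
  Liouville : VF
  /-- J² = 0 -/
  J_sq : ∀ (X : VF), J (J X) = 0
  /-- the Frölicher–Nijenhuis bracket [J,J] vanishes -/
  JJ : ∀ (X Y : VF), ⁅J X, J Y⁆ = J ⁅J X, Y⁆ + J ⁅X, J Y⁆
  /-- the Frölicher–Nijenhuis bracket [C,J] equals -J -/
  CJ : ∀ (X : VF), ⁅Liouville, J X⁆ = J ⁅Liouville, X⁆ - J X
  /-- the Liouville vector field is vertical -/
  J_Liouville : J Liouville = 0

attribute [instance] KGSetting.vfLie KGSetting.vfAlg KGSetting.fnRing
  KGSetting.fnAlg KGSetting.fnModVF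

/-- A linear connection on `TM` in the Klein–Grifone setting. -/
structure LinConn (K : KGSetting) where
  /-- the covariant derivative `D X Y = ∇_X Y` -/
  D : K.VF → K.VF → K.VF
  addX : ∀ X X' Y, D (X + X') Y = D X Y + D X' Y
  smulX : ∀ (f : K.Fn) X Y, D (f • X) Y = f • D X Y
  addY : ∀ X Y Y', D X (Y + Y') = D X Y + D X Y'
  smulY : ∀ X (f : K.Fn) Y, D X (f • Y) = K.der X f • Y + f • D X Y

namespace LinConn

variable {K : KGSetting} (N : LinConn K)

/-- the classical torsion `T(X,Y) = ∇_X Y − ∇_Y X − [X,Y]` -/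
def tor (X Y : K.VF) : K.VF := N.D X Y - N.D Y X - ⁅X, Y⁆

/-- the classical curvature `K(X,Y)Z = ∇_X ∇_Y Z − ∇_Y ∇_X Z − ∇_{[X,Y]} Z` -/
def curv (X Y Z : K.VF) : K.VF := N.D X (N.D Y Z) - N.D Y (N.D X Z) - N.D ⁅X, Y⁆ Z

end LinConn

/-- A Finsler space `(M,E)` in the Klein–Grifone approach: the canonical spray `S`,
the Barthel connection `Γ = [J,S]` with horizontal/vertical projectors `h`, `v`,
the associated almost-complex structure `F`, the metric `g(X,Y) = Ω(X,FY)`,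
and the Cartan tensors `𝒞` (`Ct`) and `𝒞'` (`Ct'`). -/
structure FinslerKG extends KGSetting where
  /-- the canonical spray -/
  S : VF
  JS : J S = Liouville
  /-- the spray is homogeneous of degree 2: [C,S] = S -/
  S_hom : ⁅Liouville, S⁆ = S
  /-- the Barthel connection -/
  Gam : VF →ₗ[ℝ] VF
  /-- Γ = [J,S] (Frölicher–Nijenhuis bracket) -/
  Gam_def : ∀ (X : VF), Gam X = ⁅J X, S⁆ - J ⁅X, S⁆
  JGam : ∀ (X : VF), J (Gam X) = J X
  GamJ : ∀ (X : VF), Gam (J X) = - J X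
  Gam_sq : ∀ (X : VF), Gam (Gam X) = X
  /-- the Barthel connection is homogeneous: [C,Γ] = 0 -/
  Gam_hom : ∀ (X : VF), ⁅Liouville, Gam X⁆ = Gam ⁅Liouville, X⁆
  /-- horizontal projector h = (I+Γ)/2 -/
  h : VF →ₗ[ℝ] VF
  h_def : ∀ (X : VF), (2:ℝ) • h X = X + Gam X
  /-- vertical projector v = (I−Γ)/2 -/
  v : VF →ₗ[ℝ] VF
  v_def : ∀ (X : VF), (2:ℝ) • v X = X - Gam X
  /-- the Barthel connection has vanishing torsion `t` -/
  torsion_free : ∀ (X Y : VF), v ⁅J X, h Y⁆ + v ⁅h X, J Y⁆ = J ⁅h X, h Y⁆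
  /-- the almost-complex structure of the Barthel connection -/
  F : VF →ₗ[ℝ] VF
  FJ : ∀ (X : VF), F (J X) = h X
  Fh : ∀ (X : VF), F (h X) = - J X
  /-- the metric `g(X,Y) = Ω(X,FY)` on TM -/
  g : VF →ₗ[ℝ] VF →ₗ[ℝ] Fn
  g_symm : ∀ (X Y : VF), g X Y = g Y X
  g_hJ : ∀ (X Y : VF), g (h X) (J Y) = 0
  g_hh : ∀ (X Y : VF), g (h X) (h Y) = g (J X) (J Y)
  /-- the Cartan tensor 𝒞, `Ω(𝒞(X,Y),Z) = ½(L_{JX}(J*g))(Y,Z)` -/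
  Ct : VF →ₗ[ℝ] VF →ₗ[ℝ] VF
  Ct_symm : ∀ (X Y : VF), Ct X Y = Ct Y X
  Ct_sb1 : ∀ (X Y : VF), J (Ct X Y) = 0
  Ct_sb2 : ∀ (X Y : VF), Ct (J X) Y = 0
  Ct_S : ∀ (X : VF), Ct X S = 0
  Ct_def : ∀ (X Y Z : VF), (2:ℝ) • g (Ct X Y) (J Z) =
    der (J X) (g (J Y) (J Z)) - g (J ⁅J X, Y⁆) (J Z) - g (J Y) (J ⁅J X, Z⁆)
  /-- the Cartan tensor 𝒞', `Ω(𝒞'(X,Y),Z) = ½(L_{hX}g)(JY,JZ)` -/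
  Ct' : VF →ₗ[ℝ] VF →ₗ[ℝ] VF
  Ct'_symm : ∀ (X Y : VF), Ct' X Y = Ct' Y X
  Ct'_sb1 : ∀ (X Y : VF), J (Ct' X Y) = 0
  Ct'_sb2 : ∀ (X Y : VF), Ct' (J X) Y = 0
  Ct'_S : ∀ (X : VF), Ct' X S = 0
  Ct'_def : ∀ (X Y Z : VF), (2:ℝ) • g (Ct' X Y) (J Z) =
    der (h X) (g (J Y) (J Z)) - g ⁅h X, J Y⁆ (J Z) - g (J Y) ⁅h X, J Z⁆

namespace FinslerKG

variable (K : FinslerKG)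

/-- the curvature `ℜ(X,Y) = −v[hX,hY]` of the Barthel connection -/
def Rbar (X Y : K.VF) : K.VF := - K.v ⁅K.h X, K.h Y⁆

/-- `∇` is a normal lift of the Barthel connection: `∇J = 0`,
`∇_{JX}JY = J[JX,Y]`, `∇Γ = 0`, and the nonlinear connection induced by `∇`
is the Barthel connection (equivalently `∇C = v`). -/
def IsNormalLift (N : LinConn K.toKGSetting) : Prop :=
  (∀ (X Y : K.VF), N.D X (K.J Y) = K.J (N.D X Y)) ∧
  (∀ (X Y : K.VF), N.D (K.J X) (K.J Y) = K.J ⁅K.J X, Y⁆) ∧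
  (∀ (X Y : K.VF), N.D X (K.Gam Y) = K.Gam (N.D X Y)) ∧
  (∀ (X : K.VF), N.D X K.Liouville = K.v X)

/-- `∇` is horizontally metric: `∇_{hX} g = 0`. -/
def HMetric (N : LinConn K.toKGSetting) : Prop :=
  ∀ (X Y Z : K.VF), K.der (K.h X) (K.g Y Z) =
    K.g (N.D (K.h X) Y) Z + K.g Y (N.D (K.h X) Z)

/-- the classical torsion of `∇` satisfies `J T(hX,hY) = 0`. -/
def JTorFree (N : LinConn K.toKGSetting) : Prop :=
  ∀ (X Y : K.VF), K.J (N.tor (K.h X) (K.h Y)) = 0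

/-- `∇` is the Chern connection of `(M,E)`. -/
def IsChern (N : LinConn K.toKGSetting) : Prop :=
  K.IsNormalLift N ∧ K.HMetric N ∧ K.JTorFree N

/-- the three formulas that completely determine the Chern connection. -/
def ChernEq (N : LinConn K.toKGSetting) : Prop :=
  (∀ (X Y : K.VF), N.D (K.J X) (K.J Y) = K.J ⁅K.J X, Y⁆) ∧
  (∀ (X Y : K.VF), N.D (K.h X) (K.J Y) = K.v ⁅K.h X, K.J Y⁆ + K.Ct' X Y) ∧
  (∀ (X Y : K.VF), N.D X (K.F Y) = K.F (N.D X Y))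

/-- the formulas that completely determine the Cartan connection. -/
def CartanEq (N : LinConn K.toKGSetting) : Prop :=
  (∀ (X Y : K.VF), N.D (K.J X) (K.J Y) = K.J ⁅K.J X, Y⁆ + K.Ct X Y) ∧
  (∀ (X Y : K.VF), N.D (K.h X) (K.J Y) = K.v ⁅K.h X, K.J Y⁆ + K.Ct' X Y) ∧
  (∀ (X Y : K.VF), N.D X (K.F Y) = K.F (N.D X Y))

/-- the formulas that completely determine the Berwald connection. -/
def BerwaldEq (N : LinConn K.toKGSetting) : Prop :=
  (∀ (X Y : K.VF), N.D (K.J X) (K.J Y) = K.J ⁅K.J X, Y⁆) ∧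
  (∀ (X Y : K.VF), N.D (K.h X) (K.J Y) = K.v ⁅K.h X, K.J Y⁆) ∧
  (∀ (X Y : K.VF), N.D X (K.F Y) = K.F (N.D X Y))

/-- the h-curvature `R*(X,Y)Z = K*(hX,hY)JZ` of a connection -/
def Rstar (N : LinConn K.toKGSetting) (X Y Z : K.VF) : K.VF :=
  N.curv (K.h X) (K.h Y) (K.J Z)

/-- the hv-curvature `P*(X,Y)Z = K*(hX,JY)JZ` of a connection -/
def Pstar (N : LinConn K.toKGSetting) (X Y Z : K.VF) : K.VF :=
  N.curv (K.h X) (K.J Y) (K.J Z)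

/-- the covariant derivative `(∇_W 𝒞')(X,Z)` of the Cartan tensor `𝒞'` -/
def DCt' (N : LinConn K.toKGSetting) (W X Z : K.VF) : K.VF :=
  N.D W (K.Ct' X Z) - K.Ct' (N.D W X) Z - K.Ct' X (N.D W Z)

/-- the covariant derivative `(∇_W R)(X,Y)Z` of a vector 3-form (curvature-type tensor) -/
def Dtensor3 (N : LinConn K.toKGSetting) (R : K.VF → K.VF → K.VF → K.VF)
    (W X Y Z : K.VF) : K.VF :=
  N.D W (R X Y Z) - R (N.D W X) Y Z - R X (N.D W Y) Z - R X Y (N.D W Z)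

end FinslerKG

/-!
The Chern connection commutes with `J`, so `J K*(A,B)C = K*(A,B)JC`, and its torsion is
vertical. Apply `J` to the first Bianchi identity `𝔖 K*(A,B)C = 𝔖 ((∇_A T)(B,C) + T(T(A,B),C))`
at `(hX, JY, hZ)`: the right-hand side is killed, `K*(hZ,hX)J²Y = 0`, and the two remaining
terms are `P*(X,Y,Z)` and `-P*(Z,Y,X)`.
-/

namespace LinConn

variable {K : KGSetting} (N : LinConn K)

lemma D_zero_right (X : K.VF) : N.D X 0 = 0 :=
  (AddMonoidHom.mk' (N.D X) (N.addY X)).map_zero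

lemma D_neg_left (X Y : K.VF) : N.D (-X) Y = -N.D X Y :=
  (AddMonoidHom.mk' (N.D · Y) fun X X' => N.addX X X' Y).map_neg X

lemma D_sub_left (X X' Y : K.VF) : N.D (X - X') Y = N.D X Y - N.D X' Y :=
  (AddMonoidHom.mk' (N.D · Y) fun X X' => N.addX X X' Y).map_sub X X'

lemma D_sub_right (X Y Y' : K.VF) : N.D X (Y - Y') = N.D X Y - N.D X Y' :=
  (AddMonoidHom.mk' (N.D X) (N.addY X)).map_sub Y Y'

lemma tor_add_left (X X' Y : K.VF) : N.tor (X + X') Y = N.tor X Y + N.tor X' Y := by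
  simp only [tor, N.addX, N.addY, add_lie]
  abel

lemma tor_swap (X Y : K.VF) : N.tor Y X = -N.tor X Y := by
  simp only [tor, ← lie_skew X Y]
  abel

lemma curv_swap (X Y Z : K.VF) : N.curv Y X Z = -N.curv X Y Z := by
  simp only [curv, ← lie_skew X Y, D_neg_left]
  abel

lemma curv_zero_right (X Y : K.VF) : N.curv X Y 0 = 0 := by
  simp only [curv, D_zero_right, sub_zero]

theorem bianchi_first (A B C : K.VF) :
    N.curv A B C + N.curv B C A + N.curv C A B =
    N.D A (N.tor B C) - N.tor (N.D A B) C - N.tor B (N.D A C) + N.tor (N.tor A B) C +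
    (N.D B (N.tor C A) - N.tor (N.D B C) A - N.tor C (N.D B A) + N.tor (N.tor B C) A) +
    (N.D C (N.tor A B) - N.tor (N.D C A) B - N.tor A (N.D C B) + N.tor (N.tor C A) B) := by
  have jacobi : ⁅⁅B, C⁆, A⁆ = -⁅⁅A, B⁆, C⁆ - ⁅B, ⁅A, C⁆⁆ := by
    rw [← lie_skew, leibniz_lie]
    abel
  have skew_CA : ⁅⁅C, A⁆, B⁆ = ⁅B, ⁅A, C⁆⁆ := by
    rw [← lie_skew, ← lie_skew A C, lie_neg]
  simp only [curv, tor, D_sub_left, D_sub_right, sub_lie, jacobi, skew_CA,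
    ← lie_skew (N.D A C) B, ← lie_skew (N.D B A) C, ← lie_skew (N.D C B) A]
  abel

end LinConn

namespace FinslerKG

lemma eq_of_two_smul_eq {K : FinslerKG} {a b : K.VF} (h : (2 : ℝ) • a = (2 : ℝ) • b) :
    a = b :=
  smul_right_injective K.VF two_ne_zero h

variable (K : FinslerKG)

lemma h_add_v (X : K.VF) : K.h X + K.v X = X :=
  eq_of_two_smul_eq <| by rw [smul_add, K.h_def, K.v_def, two_smul]; abel

lemma J_h (X : K.VF) : K.J (K.h X) = K.J X :=
  eq_of_two_smul_eq <| by rw [← map_smul, K.h_def, map_add, K.JGam, two_smul]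

lemma J_v (X : K.VF) : K.J (K.v X) = 0 :=
  eq_of_two_smul_eq <| by rw [smul_zero, ← map_smul, K.v_def, map_sub, K.JGam, sub_self]

variable {K}

/-- Since `Γ = [J,S]` and `Γ² = 1`, a vector in `ker J` is recovered from its bracket with
the spray; in particular `ker J = im J`. -/
lemma J_lie_S_of_J_eq_zero {V : K.VF} (hV : K.J V = 0) : K.J ⁅V, K.S⁆ = V := by
  have h := K.Gam_sq V
  rwa [K.Gam_def V, hV, zero_lie, zero_sub, map_neg, K.GamJ, neg_neg] at h

lemma J_F_of_J_eq_zero {V : K.VF} (hV : K.J V = 0) : K.J (K.F V) = V := by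
  conv_lhs => rw [← J_lie_S_of_J_eq_zero hV]
  rw [K.FJ, J_h, J_lie_S_of_J_eq_zero hV]

namespace ChernEq

variable {N : LinConn K.toKGSetting} (hN : K.ChernEq N)
include hN

lemma D_J_of_J_eq_zero {V : K.VF} (hV : K.J V = 0) (Y : K.VF) :
    N.D V (K.J Y) = K.J ⁅V, Y⁆ := by
  rw [← J_lie_S_of_J_eq_zero hV, hN.1, J_lie_S_of_J_eq_zero hV]

lemma J_D_J (X Y : K.VF) : K.J (N.D X (K.J Y)) = 0 := by
  rw [← K.h_add_v X, N.addX, hN.2.1, hN.D_J_of_J_eq_zero (K.J_v X)]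
  simp only [map_add, J_v, K.Ct'_sb1, K.J_sq, add_zero]

lemma J_D_of_J_eq_zero (X : K.VF) {V : K.VF} (hV : K.J V = 0) : K.J (N.D X V) = 0 := by
  rw [← J_lie_S_of_J_eq_zero hV]
  exact hN.J_D_J X _

lemma J_D_h (X Y : K.VF) : K.J (N.D X (K.h Y)) = N.D X (K.J Y) := by
  rw [← K.FJ Y, hN.2.2]
  exact J_F_of_J_eq_zero (hN.J_D_J X Y)

lemma J_D (X Y : K.VF) : K.J (N.D X Y) = N.D X (K.J Y) := by
  conv_lhs => rw [← K.h_add_v Y]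
  rw [N.addY, map_add, hN.J_D_h, hN.J_D_of_J_eq_zero X (K.J_v Y), add_zero]

lemma J_tor_J (X Y : K.VF) : K.J (N.tor (K.J X) Y) = 0 := by
  simp only [LinConn.tor, map_sub, hN.J_D, hN.1, K.J_sq, N.D_zero_right]
  abel

lemma J_tor_h_h (X Y : K.VF) : K.J (N.tor (K.h X) (K.h Y)) = 0 := by
  simp only [LinConn.tor, map_sub, hN.J_D, J_h, hN.2.1, K.Ct'_symm Y X,
    ← lie_skew (K.h Y) (K.J X), map_neg]
  rw [← K.torsion_free X Y]
  abel

lemma J_tor (X Y : K.VF) : K.J (N.tor X Y) = 0 := by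
  have vert_left (X Y : K.VF) : K.J (N.tor (K.v X) Y) = 0 := by
    rw [← J_lie_S_of_J_eq_zero (K.J_v X)]
    exact hN.J_tor_J _ Y
  have h_left (X Y : K.VF) : K.J (N.tor (K.h X) Y) = 0 := by
    rw [N.tor_swap, ← K.h_add_v Y, N.tor_add_left, map_neg, map_add,
      hN.J_tor_h_h, vert_left, add_zero, neg_zero]
  rw [← K.h_add_v X, N.tor_add_left, map_add, h_left, vert_left, add_zero]

lemma J_curv (X Y Z : K.VF) : K.J (N.curv X Y Z) = N.curv X Y (K.J Z) := by
  simp only [LinConn.curv, map_sub, hN.J_D]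

lemma J_curv_cyclic (X Y Z : K.VF) :
    K.J (N.curv X Y Z + N.curv Y Z X + N.curv Z X Y) = 0 := by
  rw [N.bianchi_first]
  simp only [map_add, map_sub, hN.J_tor, hN.J_D, N.D_zero_right]
  abel

end ChernEq

end FinslerKG

/-- The hv-curvature `P*` of the Chern connection satisfies
`P*(X,Y)Z = P*(Z,Y)X` for all vector fields `X, Y, Z` on `TM`. -/
theorem chern_hv_symmetry (K : FinslerKG) (N : LinConn K.toKGSetting)
    (hN : K.ChernEq N) :
    ∀ X Y Z : K.VF, K.Pstar N X Y Z = K.Pstar N Z Y X := by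
  intro X Y Z
  have cyclic := hN.J_curv_cyclic (K.h X) (K.J Y) (K.h Z)
  rw [map_add, map_add, hN.J_curv, hN.J_curv, hN.J_curv, N.curv_swap (K.h Z), K.J_h, K.J_h,
    K.J_sq, N.curv_zero_right, add_zero, ← sub_eq_add_neg, sub_eq_zero] at cyclic
  exact cyclic
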